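/- For the (binary, linear) special case of randomized smoothing: let f : ℝⁿ → {0,1} be the indicator of a half-space f(x) = 1 iff ⟨w, x⟩ ≥ b with ‖w‖₂ = 1, and define g(x) = 1 iff P_{ε ~ N(0, σ²I)}(f(x+ε) = 1) > 1/2. If p_A := P(f(x+ε)=1) > 1/2, then g(x+δ) = 1 for every δ with ‖δ‖₂ < σ·Φ⁻¹(p_A). -/

import Mathlib

open ProbabilityTheory MeasureTheory

/-- The standard normal CDF. -/
noncomputable def Phi (t : ℝ) : ℝ := ((gaussianReal 0 1) (Set.Iic t)).toReal

/-- The inverse of the standard normal CDF. -/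
noncomputable def PhiInv : ℝ → ℝ := Function.invFun Phi

/-- The isotropic Gaussian measure `N(0, σ² I)` on `ℝⁿ` (with the ℓ2 norm). -/
noncomputable def gaussE (n : ℕ) (σ : ℝ) : Measure (EuclideanSpace ℝ (Fin n)) :=
  (Measure.pi fun _ : Fin n => gaussianReal 0 ⟨σ ^ 2, sq_nonneg σ⟩).map
    ⇑(EuclideanSpace.equiv (Fin n) ℝ).symm

/-!
Under `gaussE n σ` the noise is `σ` times a standard Gaussian vector, and a unit linear functional
of a standard Gaussian vector is `N(0, 1)`. Hence the smoothed probability at `z` is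
`Φ((⟪w, z⟫ - b) / σ)`, so `σ · Φ⁻¹(p_A) = ⟪w, x⟫ - b` is the distance from `x` to the decision
hyperplane, and a perturbation shorter than that keeps `⟪w, x + δ⟫ > b`, i.e. keeps the smoothed
probability above `Φ(0) = 1/2`.
-/

open Set
open scoped RealInnerProductSpace NNReal

lemma gaussE_eq_map_stdGaussian (n : ℕ) (σ : ℝ) :
    gaussE n σ = (stdGaussian (EuclideanSpace ℝ (Fin n))).map (σ • ·) := by
  have hvar : (⟨σ ^ 2, sq_nonneg σ⟩ : ℝ≥0) = .mk (σ ^ 2) (sq_nonneg _) * 1 := (mul_one _).symm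
  have hpi : Measure.pi (fun _ : Fin n => gaussianReal 0 ⟨σ ^ 2, sq_nonneg σ⟩)
      = (Measure.pi fun _ : Fin n => gaussianReal 0 1).map (fun u i => σ * u i) := by
    rw [Measure.pi_map_pi (fun _ => by fun_prop), hvar, gaussianReal_map_const_mul, mul_zero]
    rfl
  rw [gaussE, hpi, ← map_pi_eq_stdGaussian, Measure.map_map (by fun_prop) (by fun_prop),
    Measure.map_map (by fun_prop) (by fun_prop)]
  rfl

lemma stdGaussian_map_inner {E : Type*} [NormedAddCommGroup E] [InnerProductSpace ℝ E]
    [FiniteDimensional ℝ E] [MeasurableSpace E] [BorelSpace E] (w : E) :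
    (stdGaussian E).map (⟪w, ·⟫) = gaussianReal 0 (‖w‖₊ ^ 2) := by
  have := IsGaussian.map_eq_gaussianReal (μ := stdGaussian E) (innerSL ℝ w)
  rw [integral_strongDual_stdGaussian, variance_dual_stdGaussian, innerSL_apply_norm] at this
  convert this using 2 <;> ext <;> simp

lemma gaussE_map_inner (n : ℕ) (σ : ℝ) (w : EuclideanSpace ℝ (Fin n)) :
    (gaussE n σ).map (⟪w, ·⟫) = gaussianReal 0 (‖σ • w‖₊ ^ 2) := by
  have hcomp : (⟪w, ·⟫) ∘ (σ • ·) = (σ * ·) ∘ (⟪w, ·⟫) := by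
    ext z; simp [inner_smul_right]
  rw [gaussE_eq_map_stdGaussian, Measure.map_map (by fun_prop) (by fun_prop), hcomp,
    ← Measure.map_map (by fun_prop) (by fun_prop), stdGaussian_map_inner,
    gaussianReal_map_const_mul, mul_zero]
  congr 1
  apply NNReal.eq
  simp [norm_smul, mul_pow]

lemma Phi_eq_cdf : Phi = cdf (gaussianReal 0 1) :=
  funext fun t => (cdf_eq_real _ t).symm

lemma gaussianReal_Ici_toReal_eq_Phi_neg (a : ℝ) : (gaussianReal 0 1 (Ici a)).toReal = Phi (-a) := by
  have hpre : Ici a = (fun t : ℝ => -t) ⁻¹' Iic (-a) := by ext; simp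
  rw [hpre, ← Measure.map_apply measurable_neg measurableSet_Iic, gaussianReal_map_neg, neg_zero,
    Phi]

lemma Phi_neg (t : ℝ) : Phi (-t) = 1 - Phi t := by
  have := nullSingletonClass_gaussianReal (μ := 0) one_ne_zero
  rw [← gaussianReal_Ici_toReal_eq_Phi_neg, ← measure_congr Ioi_ae_eq_Ici, ← compl_Iic]
  exact probReal_compl_eq_one_sub measurableSet_Iic

lemma Phi_zero : Phi 0 = 1 / 2 := by
  have h := Phi_neg 0
  rw [neg_zero] at h
  linarith

lemma Phi_strictMono : StrictMono Phi := by
  intro s t hst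
  have hpos : gaussianReal 0 1 (Ioc s t) ≠ 0 := fun h => by
    simpa [hst.not_ge] using gaussianReal_absolutelyContinuous' 0 one_ne_zero h
  rw [← measure_cdf (gaussianReal 0 1), StieltjesFunction.measure_Ioc, ← Phi_eq_cdf] at hpos
  simpa using hpos

lemma PhiInv_Phi (t : ℝ) : PhiInv (Phi t) = t :=
  Function.leftInverse_invFun Phi_strictMono.injective t

lemma gaussE_halfspace_toReal_eq_Phi (n : ℕ) {σ : ℝ} (hσ : 0 < σ) {w : EuclideanSpace ℝ (Fin n)}
    (hw : ‖w‖ = 1) (b : ℝ) (z : EuclideanSpace ℝ (Fin n)) :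
    (gaussE n σ {ε | b ≤ ⟪w, z + ε⟫}).toReal = Phi ((⟪w, z⟫ - b) / σ) := by
  have hlaw : (gaussE n σ).map (⟪σ⁻¹ • w, ·⟫) = gaussianReal 0 1 := by
    have hnw : ‖w‖₊ = 1 := NNReal.eq hw
    rw [gaussE_map_inner, smul_inv_smul₀ hσ.ne', hnw, one_pow]
  have hpre : {ε | b ≤ ⟪w, z + ε⟫} = (⟪σ⁻¹ • w, ·⟫) ⁻¹' Ici ((b - ⟪w, z⟫) / σ) := by
    ext ε
    simp only [mem_ofPred_eq, mem_preimage, mem_Ici, inner_add_right, real_inner_smul_left,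
      ← div_eq_inv_mul, div_le_div_iff_of_pos_right hσ, sub_le_iff_le_add']
  rw [hpre, ← Measure.map_apply (by fun_prop) measurableSet_Ici, hlaw, gaussianReal_Ici_toReal_eq_Phi_neg,
    ← neg_div, neg_sub]

theorem halfspace_smoothing_certified_general {n : ℕ} (σ : ℝ) (hσ : 0 < σ)
    (w : EuclideanSpace ℝ (Fin n)) (hw : ‖w‖ = 1) (b : ℝ)
    (f : EuclideanSpace ℝ (Fin n) → ℕ)
    (hf : ∀ z, f z = if b ≤ (inner ℝ w z : ℝ) then 1 else 0)
    (g : EuclideanSpace ℝ (Fin n) → ℕ)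
    (hg : ∀ z, g z = if 1 / 2 < ((gaussE n σ) {ε | f (z + ε) = 1}).toReal then 1 else 0)
    (x : EuclideanSpace ℝ (Fin n)) (pA : ℝ)
    (hpA : pA = ((gaussE n σ) {ε | f (x + ε) = 1}).toReal) :
    ∀ δ : EuclideanSpace ℝ (Fin n), ‖δ‖ < σ * PhiInv pA → g (x + δ) = 1 := by
  have hprob (z : EuclideanSpace ℝ (Fin n)) :
      (gaussE n σ {ε | f (z + ε) = 1}).toReal = Phi ((⟪w, z⟫ - b) / σ) := by
    simp only [hf, ite_eq_left_iff, zero_ne_one, imp_false, not_not]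
    exact gaussE_halfspace_toReal_eq_Phi n hσ hw b z
  intro δ hδ
  rw [hpA, hprob, PhiInv_Phi, mul_div_cancel₀ _ hσ.ne'] at hδ
  have hwδ : -‖δ‖ ≤ ⟪w, δ⟫ := by
    simpa [hw] using neg_le_of_abs_le (abs_real_inner_le_norm w δ)
  rw [hg, hprob, if_pos]
  calc 1 / 2 = Phi 0 := Phi_zero.symm
    _ < Phi ((⟪w, x + δ⟫ - b) / σ) :=
      Phi_strictMono (div_pos (by rw [inner_add_right]; linarith) hσ)

theorem halfspace_smoothing_certified {n : ℕ} (σ : ℝ) (hσ : 0 < σ)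
    (w : EuclideanSpace ℝ (Fin n)) (hw : ‖w‖ = 1) (b : ℝ)
    (f : EuclideanSpace ℝ (Fin n) → ℕ)
    (hf : ∀ z, f z = if b ≤ (inner ℝ w z : ℝ) then 1 else 0)
    (g : EuclideanSpace ℝ (Fin n) → ℕ)
    (hg : ∀ z, g z = if 1 / 2 < ((gaussE n σ) {ε | f (z + ε) = 1}).toReal then 1 else 0)
    (x : EuclideanSpace ℝ (Fin n)) (pA : ℝ)
    (hpA : pA = ((gaussE n σ) {ε | f (x + ε) = 1}).toReal) (hp : 1 / 2 < pA) :
    ∀ δ : EuclideanSpace ℝ (Fin n), ‖δ‖ < σ * PhiInv pA → g (x + δ) = 1 :=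
  halfspace_smoothing_certified_general σ hσ w hw b f hf g hg x pA hpA
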